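/- For every infinite metric space M, the Banach space ℓ∞ embeds isomorphically into Lip_0(M). Consequently, ℓ1 is isomorphic to a complemented subspace of the Lipschitz-free space F(M). -/

import Mathlib

open Metric Set
open scoped NNReal ENNReal

/-- The space of real-valued Lipschitz functions on `M` vanishing at the base point `z`. -/
structure Lip0 {M : Type*} [MetricSpace M] (z : M) where
  toFun : M → ℝ
  lipschitz' : ∃ K : ℝ≥0, LipschitzWith K toFun
  map_base' : toFun z = 0

namespace Lip0

variable {M : Type*} [MetricSpace M] {z : M}

instance : FunLike (Lip0 z) M ℝ where
  coe := Lip0.toFun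
  coe_injective := by rintro ⟨f, _, _⟩ ⟨g, _, _⟩ h; simpa using h

@[simp] lemma coe_mk (f : M → ℝ) (h1 h2) : ⇑(⟨f, h1, h2⟩ : Lip0 z) = f := rfl

lemma map_base (f : Lip0 z) : f z = 0 := f.map_base'

instance : Zero (Lip0 z) := ⟨⟨0, ⟨0, LipschitzWith.const (0 : ℝ)⟩, rfl⟩⟩

instance : Add (Lip0 z) :=
  ⟨fun f g => ⟨⇑f + ⇑g,
    ⟨f.lipschitz'.choose + g.lipschitz'.choose,
      f.lipschitz'.choose_spec.add g.lipschitz'.choose_spec⟩,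
    by simp [map_base f, map_base g]⟩⟩

instance : Neg (Lip0 z) :=
  ⟨fun f => ⟨-⇑f, ⟨f.lipschitz'.choose, f.lipschitz'.choose_spec.neg⟩,
    by simp [map_base f]⟩⟩

lemma lip_const_smul {f : M → ℝ} {K : ℝ≥0} (h : LipschitzWith K f) (c : ℝ) :
    LipschitzWith (‖c‖₊ * K) (c • f) := by
  rw [lipschitzWith_iff_dist_le_mul] at h ⊢
  intro x y
  calc dist ((c • f) x) ((c • f) y) = ‖c‖ * dist (f x) (f y) := by
        rw [Pi.smul_apply, Pi.smul_apply, dist_smul₀]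
    _ ≤ ‖c‖ * (K * dist x y) := by
        apply mul_le_mul_of_nonneg_left (h x y) (norm_nonneg c)
    _ = (‖c‖₊ * K : ℝ≥0) * dist x y := by push_cast; ring

instance : SMul ℝ (Lip0 z) :=
  ⟨fun c f => ⟨c • ⇑f,
    ⟨‖c‖₊ * f.lipschitz'.choose, lip_const_smul f.lipschitz'.choose_spec c⟩,
    by simp [map_base f]⟩⟩

instance : Sub (Lip0 z) := ⟨fun f g => f + -g⟩
instance : SMul ℕ (Lip0 z) := ⟨fun n f => (n : ℝ) • f⟩
instance : SMul ℤ (Lip0 z) := ⟨fun n f => (n : ℝ) • f⟩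

@[simp] lemma coe_zero : ⇑(0 : Lip0 z) = 0 := rfl
@[simp] lemma coe_add (f g : Lip0 z) : ⇑(f + g) = ⇑f + ⇑g := rfl
@[simp] lemma coe_neg (f : Lip0 z) : ⇑(-f) = -⇑f := rfl
@[simp] lemma coe_smul (c : ℝ) (f : Lip0 z) : ⇑(c • f) = c • ⇑f := rfl
@[simp] lemma coe_sub (f g : Lip0 z) : ⇑(f - g) = ⇑f - ⇑g := by
  show ⇑(f + -g) = _; ext x; simp [sub_eq_add_neg]

instance : AddCommGroup (Lip0 z) :=
  DFunLike.coe_injective.addCommGroup _ coe_zero coe_add coe_neg coe_sub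
    (fun f n => by show ⇑((n : ℝ) • f) = _; ext x; simp)
    (fun f n => by show ⇑((n : ℝ) • f) = _; ext x; simp)

instance : Module ℝ (Lip0 z) := by
  refine Function.Injective.module ℝ (AddMonoidHom.mk' (fun (f : Lip0 z) => ⇑f) coe_add) ?_ ?_
  · exact DFunLike.coe_injective
  · exact coe_smul

/-- The least Lipschitz constant. -/
noncomputable def lipConst (f : M → ℝ) : ℝ≥0 := sInf {K : ℝ≥0 | LipschitzWith K f}

lemma lipschitzWith_lipConst {f : M → ℝ} (h : ∃ K : ℝ≥0, LipschitzWith K f) :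
    LipschitzWith (lipConst f) f := by
  rw [lipschitzWith_iff_dist_le_mul]
  intro x y
  rcases eq_or_ne x y with rfl | hxy
  · simp
  have hd : 0 < dist x y := dist_pos.2 hxy
  have h1 : @id ℝ≥0 ⟨dist (f x) (f y) / dist x y, by positivity⟩ ≤ lipConst f := by
    apply le_csInf h
    intro K hK
    rw [← NNReal.coe_le_coe]
    have hK' := lipschitzWith_iff_dist_le_mul.1 hK
    exact (div_le_iff₀ hd).2 (by simpa [mul_comm] using hK' x y)
  rw [← NNReal.coe_le_coe] at h1
  calc dist (f x) (f y) = dist (f x) (f y) / dist x y * dist x y := by field_simp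
    _ ≤ (lipConst f : ℝ) * dist x y := by
        apply mul_le_mul_of_nonneg_right _ hd.le
        exact h1



lemma lipConst_le {f : M → ℝ} {K : ℝ≥0} (h : LipschitzWith K f) : lipConst f ≤ K :=
  csInf_le (OrderBot.bddBelow _) h

lemma dist_le_lipConst (f : Lip0 z) (x y : M) :
    dist (f x) (f y) ≤ (lipConst ⇑f : ℝ) * dist x y :=
  lipschitzWith_iff_dist_le_mul.1 (lipschitzWith_lipConst f.lipschitz') x y

noncomputable instance : Norm (Lip0 z) := ⟨fun f => (lipConst ⇑f : ℝ)⟩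

lemma norm_def (f : Lip0 z) : ‖f‖ = (lipConst ⇑f : ℝ) := rfl

lemma eq_zero_of_lipConst_eq_zero (f : Lip0 z) (h : lipConst ⇑f = 0) : f = 0 := by
  apply DFunLike.coe_injective
  ext x
  have h2 := dist_le_lipConst f x z
  rw [h, map_base f] at h2
  simp only [NNReal.coe_zero, zero_mul] at h2
  have := dist_nonneg (x := f x) (y := (0:ℝ))
  simp only [coe_zero, Pi.zero_apply]
  have : dist (f x) (0:ℝ) = 0 := le_antisymm h2 dist_nonneg
  simpa [dist_eq_norm] using this

lemma lipConst_smul (c : ℝ) (f : Lip0 z) : lipConst ⇑(c • f) = ‖c‖₊ * lipConst ⇑f := by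
  have le1 : ∀ (c : ℝ) (f : Lip0 z), lipConst ⇑(c • f) ≤ ‖c‖₊ * lipConst ⇑f := by
    intro c f
    exact lipConst_le (lip_const_smul (lipschitzWith_lipConst f.lipschitz') c)
  rcases eq_or_ne c 0 with rfl | hc
  · simp only [nnnorm_zero, zero_mul]
    refine le_antisymm ?_ zero_le
    have : (0:ℝ) • f = (0 : Lip0 z) := zero_smul ℝ f
    calc lipConst ⇑((0:ℝ) • f) ≤ ‖(0:ℝ)‖₊ * lipConst ⇑f := le1 0 f
      _ = 0 := by simp
  · refine le_antisymm (le1 c f) ?_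
    have h2 := le1 c⁻¹ (c • f)
    rw [inv_smul_smul₀ hc] at h2
    have hcpos : (0:ℝ≥0) < ‖c‖₊ := by simpa using hc
    calc ‖c‖₊ * lipConst ⇑f ≤ ‖c‖₊ * (‖c⁻¹‖₊ * lipConst ⇑(c • f)) := by
          exact mul_le_mul_of_nonneg_left h2 zero_le
      _ = lipConst ⇑(c • f) := by
          rw [← mul_assoc]
          have : ‖c‖₊ * ‖c⁻¹‖₊ = 1 := by
            rw [← nnnorm_mul, mul_inv_cancel₀ hc, nnnorm_one]
          rw [this, one_mul]

noncomputable def addGroupNorm (z : M) : AddGroupNorm (Lip0 z) where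
  toFun f := (lipConst ⇑f : ℝ)
  map_zero' := by
    simp only [coe_zero]
    norm_cast
    exact le_antisymm (lipConst_le (LipschitzWith.const' (0:ℝ))) zero_le
  add_le' f g := by
    push_cast
    have : lipConst ⇑(f + g) ≤ lipConst ⇑f + lipConst ⇑g := by
      refine lipConst_le ?_
      exact (lipschitzWith_lipConst f.lipschitz').add (lipschitzWith_lipConst g.lipschitz')
    exact_mod_cast this
  neg' f := by
    have h : (-⇑f : M → ℝ) = ⇑((-1 : ℝ) • f) := by ext x; simp
    show (lipConst ⇑(-f) : ℝ) = (lipConst ⇑f : ℝ)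
    rw [coe_neg, h, lipConst_smul]
    simp
  eq_zero_of_map_eq_zero' f h := by
    apply eq_zero_of_lipConst_eq_zero
    have h' : (lipConst ⇑f : ℝ) = 0 := h
    exact_mod_cast h'

noncomputable instance : NormedAddCommGroup (Lip0 z) :=
  (addGroupNorm z).toNormedAddCommGroup

noncomputable instance : NormedSpace ℝ (Lip0 z) where
  norm_smul_le c f := by
    show (lipConst ⇑(c • f) : ℝ) ≤ ‖c‖ * (lipConst ⇑f : ℝ)
    rw [lipConst_smul]
    push_cast
    simp [Real.norm_eq_abs]

end Lip0

section FreeSpace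

variable {M : Type*} [MetricSpace M]

/-- The evaluation functional `δ_x ∈ Lip_0(M)^*`. -/
noncomputable def dirac (z x : M) : StrongDual ℝ (Lip0 z) :=
  LinearMap.mkContinuous
    { toFun := fun f => f x
      map_add' := by intro f g; simp
      map_smul' := by intro c f; simp }
    (dist x z)
    (by
      intro f
      have := Lip0.dist_le_lipConst f x z
      rw [Lip0.map_base f, dist_zero_right] at this
      show ‖f x‖ ≤ dist x z * (Lip0.lipConst ⇑f : ℝ)
      simpa [Lip0.norm_def, mul_comm] using this)

@[simp] lemma dirac_apply (z x : M) (f : Lip0 z) : dirac z x f = f x := rfl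

/-- The Lipschitz-free space over `M` with base point `z`: the closed linear span of
the evaluation functionals inside `Lip_0(M)^*`. -/
noncomputable def FreeSpace (z : M) : Submodule ℝ (StrongDual ℝ (Lip0 z)) :=
  (Submodule.span ℝ (Set.range (dirac z))).topologicalClosure

/-- The canonical embedding `δ : M → F(M)`. -/
noncomputable def diracF (z x : M) : FreeSpace z :=
  ⟨dirac z x, Submodule.le_topologicalClosure _ (Submodule.subset_span ⟨x, rfl⟩)⟩

end FreeSpace

section FreeSpaceInst

variable {M : Type*} [MetricSpace M] {z : M}

instance Lip0.instNormSMulClass : NormSMulClass ℝ (Lip0 z) := NormedSpace.toNormSMulClass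

noncomputable instance FreeSpace.instAddCommGroup : AddCommGroup ↥(FreeSpace z) :=
  Submodule.addCommGroup _

noncomputable instance FreeSpace.instNormedAddCommGroup : NormedAddCommGroup ↥(FreeSpace z) :=
  Submodule.normedAddCommGroup _

noncomputable instance FreeSpace.instNormedSpace : NormedSpace ℝ ↥(FreeSpace z) :=
  Submodule.normedSpace _

end FreeSpaceInst

section GoodSystemSec

variable {M : Type*} [MetricSpace M]

/-- A system of disjoint balls with companion outside points, used to build a copy of `ℓ∞`
inside `Lip_0(M)`. -/
structure GoodSystem (z : M) where
  x : ℕ → M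
  r : ℕ → ℝ
  y : ℕ → M
  r_pos : ∀ n, 0 < r n
  disj : ∀ (u : M) (m n : ℕ), m ≠ n → dist u (x m) < r m → ¬ dist u (x n) < r n
  z_out : ∀ n, r n ≤ dist z (x n)
  y_out : ∀ n m, r m ≤ dist (y n) (x m)
  close : ∀ n, dist (x n) (y n) ≤ 4 * r n

namespace GoodSystem

variable {z : M} (G : GoodSystem z)

/-- The basic bump function at `x n`. -/
noncomputable def bump (n : ℕ) (u : M) : ℝ := max (G.r n - dist u (G.x n)) 0

lemma bump_nonneg (n : ℕ) (u : M) : 0 ≤ G.bump n u := le_max_right _ _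

lemma bump_eq_zero {n : ℕ} {u : M} (h : G.r n ≤ dist u (G.x n)) : G.bump n u = 0 :=
  max_eq_right (by linarith)

lemma bump_pos_iff {n : ℕ} {u : M} : G.bump n u ≠ 0 ↔ dist u (G.x n) < G.r n := by
  constructor
  · intro h
    by_contra hc
    exact h (G.bump_eq_zero (not_lt.1 hc))
  · intro h
    have : 0 < G.r n - dist u (G.x n) := by linarith
    simp only [bump, ne_eq]
    positivity

lemma bump_self (n : ℕ) : G.bump n (G.x n) = G.r n := by
  simp [bump, dist_self, le_of_lt (G.r_pos n)]

lemma bump_lip (n : ℕ) (u v : M) : |G.bump n u - G.bump n v| ≤ dist u v := by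
  refine le_trans (abs_max_sub_max_le_abs _ _ _) ?_
  have h := abs_dist_sub_le u v (G.x n)
  rw [abs_sub_comm] at h
  calc |G.r n - dist u (G.x n) - (G.r n - dist v (G.x n))|
      = |dist v (G.x n) - dist u (G.x n)| := by ring_nf
    _ ≤ dist u v := h

lemma bump_le_dist {n : ℕ} {u v : M} (h : G.r n ≤ dist u (G.x n)) :
    G.bump n v ≤ dist u v := by
  have := G.bump_lip n v u
  rw [G.bump_eq_zero h] at this
  have h2 := le_abs_self (G.bump n v - 0)
  rw [dist_comm]
  simpa using le_trans h2 this

/-- At most one bump is nonzero at each point. -/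
lemma bump_unique {u : M} {m n : ℕ} (hm : G.bump m u ≠ 0) (hn : G.bump n u ≠ 0) : m = n := by
  by_contra hmn
  exact G.disj u m n hmn (G.bump_pos_iff.1 hm) (G.bump_pos_iff.1 hn)

lemma summable_bump (α : ℕ → ℝ) (u : M) : Summable (fun n => α n * G.bump n u) := by
  by_cases h : ∃ n, G.bump n u ≠ 0
  · obtain ⟨n₀, hn₀⟩ := h
    apply summable_of_ne_finset_zero (s := {n₀})
    intro b hb
    simp only [Finset.mem_singleton] at hb
    have : G.bump b u = 0 := by
      by_contra hc
      exact hb (G.bump_unique hc hn₀)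
    simp [this]
  · push_neg at h
    apply summable_of_ne_finset_zero (s := (∅ : Finset ℕ))
    intro b _
    simp [h b]

/-- The sum `Σ αₙ bumpₙ`. -/
noncomputable def Tfun (α : ℕ → ℝ) (u : M) : ℝ := ∑' n, α n * G.bump n u

lemma Tfun_eq_single (α : ℕ → ℝ) {u : M} {n₀ : ℕ} (h : dist u (G.x n₀) < G.r n₀) :
    G.Tfun α u = α n₀ * G.bump n₀ u := by
  refine tsum_eq_single n₀ ?_
  intro b hb
  have : G.bump b u = 0 := by
    by_contra hc
    exact hb (G.bump_unique hc (G.bump_pos_iff.2 h))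
  simp [this]

lemma Tfun_eq_zero (α : ℕ → ℝ) {u : M} (h : ∀ n, G.r n ≤ dist u (G.x n)) :
    G.Tfun α u = 0 := by
  have : ∀ n, α n * G.bump n u = 0 := fun n => by simp [G.bump_eq_zero (h n)]
  simp [Tfun, this]

lemma Tfun_x (α : ℕ → ℝ) (n : ℕ) : G.Tfun α (G.x n) = α n * G.r n := by
  rw [G.Tfun_eq_single α (n₀ := n) (by simp [G.r_pos n]), G.bump_self]

lemma Tfun_y (α : ℕ → ℝ) (n : ℕ) : G.Tfun α (G.y n) = 0 :=
  G.Tfun_eq_zero α (fun m => G.y_out n m)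

lemma Tfun_z (α : ℕ → ℝ) : G.Tfun α z = 0 :=
  G.Tfun_eq_zero α G.z_out

/-- The crucial Lipschitz estimate. -/
lemma Tfun_lip (α : ℕ → ℝ) (C : ℝ) (hC : 0 ≤ C) (hα : ∀ n, |α n| ≤ C) (u v : M) :
    |G.Tfun α u - G.Tfun α v| ≤ 2 * C * dist u v := by
  classical
  have hsub : G.Tfun α u - G.Tfun α v = ∑' n, (α n * G.bump n u - α n * G.bump n v) :=
    (Summable.tsum_sub (G.summable_bump α u) (G.summable_bump α v)).symm
  set nu : ℕ := if h : ∃ n, G.bump n u ≠ 0 then h.choose else 0 with hnu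
  set nv : ℕ := if h : ∃ n, G.bump n v ≠ 0 then h.choose else 0 with hnv
  have hu : ∀ b, b ≠ nu → G.bump b u = 0 := by
    intro b hb
    by_contra hc
    have hex : ∃ n, G.bump n u ≠ 0 := ⟨b, hc⟩
    rw [hnu] at hb
    simp only [dif_pos hex] at hb
    exact hb (G.bump_unique hc hex.choose_spec)
  have hv : ∀ b, b ≠ nv → G.bump b v = 0 := by
    intro b hb
    by_contra hc
    have hex : ∃ n, G.bump n v ≠ 0 := ⟨b, hc⟩
    rw [hnv] at hb
    simp only [dif_pos hex] at hb
    exact hb (G.bump_unique hc hex.choose_spec)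
  have hsum : G.Tfun α u - G.Tfun α v
      = ∑ n ∈ ({nu, nv} : Finset ℕ), (α n * G.bump n u - α n * G.bump n v) := by
    rw [hsub]
    refine tsum_eq_sum ?_
    intro b hb
    simp only [Finset.mem_insert, Finset.mem_singleton, not_or] at hb
    rw [hu b hb.1, hv b hb.2]
    ring
  rw [hsum]
  have hterm : ∀ n, |α n * G.bump n u - α n * G.bump n v| ≤ C * dist u v := by
    intro n
    have : α n * G.bump n u - α n * G.bump n v = α n * (G.bump n u - G.bump n v) := by ring
    rw [this, abs_mul]
    exact mul_le_mul (hα n) (G.bump_lip n u v) (abs_nonneg _) hC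
  calc |∑ n ∈ ({nu, nv} : Finset ℕ), (α n * G.bump n u - α n * G.bump n v)|
      ≤ ∑ n ∈ ({nu, nv} : Finset ℕ), |α n * G.bump n u - α n * G.bump n v| :=
        Finset.abs_sum_le_sum_abs _ _
    _ ≤ ∑ _n ∈ ({nu, nv} : Finset ℕ), C * dist u v := Finset.sum_le_sum (fun n _ => hterm n)
    _ = ({nu, nv} : Finset ℕ).card * (C * dist u v) := by rw [Finset.sum_const, nsmul_eq_mul]
    _ ≤ 2 * (C * dist u v) := by
        have hcard : (({nu, nv} : Finset ℕ).card : ℝ) ≤ 2 := by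
          have := Finset.card_insert_le nu ({nv} : Finset ℕ)
          simp only [Finset.card_singleton] at this
          exact_mod_cast this
        have : (0:ℝ) ≤ C * dist u v := mul_nonneg hC dist_nonneg
        nlinarith
    _ = 2 * C * dist u v := by ring

end GoodSystem

end GoodSystemSec
section TLsec

variable {M : Type*} [MetricSpace M] {z : M}

namespace GoodSystem

variable (G : GoodSystem z)

lemma abs_apply_le_norm (α : lp (fun _ : ℕ => ℝ) ∞) (n : ℕ) : |α n| ≤ ‖α‖ :=
  lp.norm_apply_le_norm ENNReal.top_ne_zero α n

/-- `T α` as an element of `Lip_0`. -/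
noncomputable def Tlip (α : lp (fun _ : ℕ => ℝ) ∞) : Lip0 z where
  toFun := G.Tfun α
  lipschitz' := by
    refine ⟨(2 * ‖α‖).toNNReal, ?_⟩
    rw [lipschitzWith_iff_dist_le_mul]
    intro u v
    rw [Real.dist_eq]
    refine le_trans (G.Tfun_lip α ‖α‖ (norm_nonneg α) (abs_apply_le_norm α) u v) ?_
    have h1 : 2 * ‖α‖ ≤ ((2 * ‖α‖).toNNReal : ℝ) := by
      rw [Real.coe_toNNReal']
      exact le_max_left _ _
    have := dist_nonneg (x := u) (y := v)
    nlinarith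
  map_base' := G.Tfun_z α

@[simp] lemma Tlip_apply (α : lp (fun _ : ℕ => ℝ) ∞) (u : M) :
    (G.Tlip α : Lip0 z) u = G.Tfun α u := rfl

lemma norm_Tlip_le (α : lp (fun _ : ℕ => ℝ) ∞) : ‖(G.Tlip α : Lip0 z)‖ ≤ 2 * ‖α‖ := by
  rw [Lip0.norm_def]
  have hK : LipschitzWith (2 * ‖α‖).toNNReal (G.Tfun α : M → ℝ) := by
    rw [lipschitzWith_iff_dist_le_mul]
    intro u v
    rw [Real.dist_eq]
    refine le_trans (G.Tfun_lip α ‖α‖ (norm_nonneg α) (abs_apply_le_norm α) u v) ?_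
    have h1 : 2 * ‖α‖ ≤ ((2 * ‖α‖).toNNReal : ℝ) := by
      rw [Real.coe_toNNReal']
      exact le_max_left _ _
    have := dist_nonneg (x := u) (y := v)
    nlinarith
  have := Lip0.lipConst_le (f := (G.Tfun α : M → ℝ)) hK
  have h2 : ((Lip0.lipConst (G.Tfun α : M → ℝ) : ℝ≥0) : ℝ) ≤ ((2 * ‖α‖).toNNReal : ℝ) :=
    NNReal.coe_le_coe.2 this
  refine le_trans h2 ?_
  rw [Real.coe_toNNReal']
  exact max_le le_rfl (by positivity)

/-- The embedding `T : ℓ∞ → Lip_0(M)`. -/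
noncomputable def TL : lp (fun _ : ℕ => ℝ) ∞ →L[ℝ] Lip0 z :=
  LinearMap.mkContinuous
    { toFun := fun α => G.Tlip α
      map_add' := by
        intro α β
        apply DFunLike.coe_injective
        ext u
        simp only [Tlip_apply, Lip0.coe_add, Pi.add_apply]
        show G.Tfun (⇑(α + β)) u = _
        have hcoe : ∀ n, (⇑(α + β) : ℕ → ℝ) n = α n + β n := fun n => by
          rw [lp.coeFn_add]; rfl
        have : (fun n => (⇑(α + β) : ℕ → ℝ) n * G.bump n u)
            = fun n => α n * G.bump n u + β n * G.bump n u := by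
          ext n; rw [hcoe n]; ring
        simp only [Tfun, this]
        exact Summable.tsum_add (G.summable_bump (⇑α) u) (G.summable_bump (⇑β) u)
      map_smul' := by
        intro c α
        apply DFunLike.coe_injective
        ext u
        simp only [Tlip_apply, RingHom.id_apply, Lip0.coe_smul, Pi.smul_apply, smul_eq_mul]
        show G.Tfun (⇑(c • α)) u = c * G.Tfun (⇑α) u
        have hcoe : ∀ n, (⇑(c • α) : ℕ → ℝ) n = c * α n := fun n => by
          rw [lp.coeFn_smul]; rfl
        have : (fun n => (⇑(c • α) : ℕ → ℝ) n * G.bump n u)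
            = fun n => c * (α n * G.bump n u) := by
          ext n; rw [hcoe n]; ring
        simp only [Tfun, this]
        exact tsum_mul_left }
    2
    (fun α => G.norm_Tlip_le α)

end GoodSystem

end TLsec
section TLlower

variable {M : Type*} [MetricSpace M] {z : M}

namespace GoodSystem

variable (G : GoodSystem z)

@[simp] lemma TL_apply (α : lp (fun _ : ℕ => ℝ) ∞) (u : M) :
    ((G.TL α : Lip0 z) : M → ℝ) u = G.Tfun α u := rfl

lemma norm_le_norm_TL (α : lp (fun _ : ℕ => ℝ) ∞) : ‖α‖ ≤ 4 * ‖G.TL α‖ := by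
  rw [lp.norm_eq_ciSup]
  refine ciSup_le ?_
  intro n
  have hr := G.r_pos n
  have key : |α n| * G.r n ≤ ‖G.TL α‖ * (4 * G.r n) := by
    have h1 : dist ((G.TL α : Lip0 z) (G.x n)) ((G.TL α : Lip0 z) (G.y n))
        ≤ (Lip0.lipConst ((G.TL α : Lip0 z) : M → ℝ) : ℝ) * dist (G.x n) (G.y n) :=
      Lip0.dist_le_lipConst _ _ _
    have h2 : dist ((G.TL α : Lip0 z) (G.x n)) ((G.TL α : Lip0 z) (G.y n)) = |α n| * G.r n := by
      rw [show ((G.TL α : Lip0 z) (G.x n)) = G.Tfun α (G.x n) from rfl,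
        show ((G.TL α : Lip0 z) (G.y n)) = G.Tfun α (G.y n) from rfl,
        G.Tfun_x, G.Tfun_y, Real.dist_eq, sub_zero, abs_mul, abs_of_pos hr]
    have h3 : (Lip0.lipConst ((G.TL α : Lip0 z) : M → ℝ) : ℝ) = ‖G.TL α‖ := rfl
    rw [h2, h3] at h1
    refine le_trans h1 ?_
    have h4 : dist (G.x n) (G.y n) ≤ 4 * G.r n := G.close n
    have h5 : (0:ℝ) ≤ ‖G.TL α‖ := norm_nonneg _
    nlinarith
  have : ‖(α : ℕ → ℝ) n‖ = |α n| := rfl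
  rw [this]
  nlinarith

include G in
lemma part1 : ∃ T : lp (fun _ : ℕ => ℝ) ∞ →L[ℝ] Lip0 z,
    ∃ c : ℝ, 0 < c ∧ ∀ α, c * ‖α‖ ≤ ‖T α‖ := by
  refine ⟨G.TL, 1/4, by norm_num, ?_⟩
  intro α
  have := G.norm_le_norm_TL α
  linarith

end GoodSystem

end TLlower
section Projection

variable {M : Type*} [MetricSpace M] {z : M}

namespace GoodSystem

variable (G : GoodSystem z)

lemma key_bound (f : Lip0 z) (n : ℕ) :
    |f (G.x n) - f (G.y n)| ≤ ‖f‖ * (4 * G.r n) := by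
  have h1 : dist (f (G.x n)) (f (G.y n))
      ≤ (Lip0.lipConst (f : M → ℝ) : ℝ) * dist (G.x n) (G.y n) :=
    Lip0.dist_le_lipConst f _ _
  rw [Real.dist_eq] at h1
  have h2 : (Lip0.lipConst (f : M → ℝ) : ℝ) = ‖f‖ := rfl
  rw [h2] at h1
  refine le_trans h1 ?_
  have := G.close n
  have := norm_nonneg f
  nlinarith

lemma beta_bound (f : Lip0 z) (n : ℕ) :
    |(f (G.x n) - f (G.y n)) / G.r n| ≤ 4 * ‖f‖ := by
  have hr := G.r_pos n
  rw [abs_div, abs_of_pos hr, div_le_iff₀ hr]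
  have := G.key_bound f n
  nlinarith

lemma beta_memℓp (f : Lip0 z) :
    Memℓp (fun n => (f (G.x n) - f (G.y n)) / G.r n) (∞ : ℝ≥0∞) := by
  refine memℓp_infty ⟨4 * ‖f‖, ?_⟩
  rintro w ⟨n, rfl⟩
  exact G.beta_bound f n

/-- The coefficient map `Lip_0(M) → ℓ∞`. -/
noncomputable def B : Lip0 z →L[ℝ] lp (fun _ : ℕ => ℝ) ∞ :=
  LinearMap.mkContinuous
    { toFun := fun f => ⟨fun n => (f (G.x n) - f (G.y n)) / G.r n, G.beta_memℓp f⟩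
      map_add' := by
        intro f g
        apply Subtype.ext
        funext n
        show (((f + g) (G.x n)) - ((f + g) (G.y n))) / G.r n = _
        have : ((⟨_, G.beta_memℓp f⟩ : lp (fun _ : ℕ => ℝ) ∞)
            + (⟨_, G.beta_memℓp g⟩ : lp (fun _ : ℕ => ℝ) ∞) : lp (fun _ : ℕ => ℝ) ∞) n
            = (f (G.x n) - f (G.y n)) / G.r n + (g (G.x n) - g (G.y n)) / G.r n := by
          rw [lp.coeFn_add]; rfl
        rw [this]
        simp only [Lip0.coe_add, Pi.add_apply]
        ring
      map_smul' := by
        intro c f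
        apply Subtype.ext
        funext n
        simp only [RingHom.id_apply, lp.coeFn_smul, Pi.smul_apply]
        show ((c • f) (G.x n) - (c • f) (G.y n)) / G.r n
            = c • ((f (G.x n) - f (G.y n)) / G.r n)
        simp only [Lip0.coe_smul, Pi.smul_apply, smul_eq_mul]
        ring }
    4
    (fun f => by
      have : ‖(⟨fun n => (f (G.x n) - f (G.y n)) / G.r n, G.beta_memℓp f⟩
          : lp (fun _ : ℕ => ℝ) ∞)‖ ≤ 4 * ‖f‖ := by
        rw [lp.norm_eq_ciSup]
        exact ciSup_le (fun n => G.beta_bound f n)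
      exact this)

@[simp] lemma B_apply (f : Lip0 z) (n : ℕ) :
    (G.B f : ℕ → ℝ) n = (f (G.x n) - f (G.y n)) / G.r n := rfl

/-- The averaging-type operator `S : Lip_0(M) → Lip_0(M)`. -/
noncomputable def S : Lip0 z →L[ℝ] Lip0 z := G.TL.comp G.B

lemma S_apply (f : Lip0 z) (u : M) : (G.S f) u = G.Tfun (G.B f) u := rfl

lemma S_x (f : Lip0 z) (n : ℕ) : (G.S f) (G.x n) = f (G.x n) - f (G.y n) := by
  rw [S_apply, G.Tfun_x, B_apply, div_mul_cancel₀]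
  exact ne_of_gt (G.r_pos n)

lemma S_y (f : Lip0 z) (n : ℕ) : (G.S f) (G.y n) = 0 := by
  rw [S_apply, G.Tfun_y]

lemma B_S (f : Lip0 z) : G.B (G.S f) = G.B f := by
  apply Subtype.ext
  funext n
  rw [B_apply, B_apply, G.S_x, G.S_y, sub_zero]

lemma S_idem (f : Lip0 z) : G.S (G.S f) = G.S f := by
  show G.TL (G.B (G.S f)) = G.S f
  rw [G.B_S]
  rfl

/-- Precomposition with `S`, as an operator on the dual. -/
noncomputable def Sd : StrongDual ℝ (Lip0 z) →L[ℝ] StrongDual ℝ (Lip0 z) :=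
  LinearMap.mkContinuous
    { toFun := fun μ => μ.comp G.S
      map_add' := fun μ ν => ContinuousLinearMap.add_comp μ ν G.S
      map_smul' := fun c μ => ContinuousLinearMap.smul_comp c μ G.S }
    ‖G.S‖
    (fun μ => by
      have := ContinuousLinearMap.opNorm_comp_le μ G.S
      calc ‖μ.comp G.S‖ ≤ ‖μ‖ * ‖G.S‖ := this
        _ = ‖G.S‖ * ‖μ‖ := mul_comm _ _)

@[simp] lemma Sd_apply (μ : StrongDual ℝ (Lip0 z)) (f : Lip0 z) :
    G.Sd μ f = μ (G.S f) := rfl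

lemma Sd_idem (μ : StrongDual ℝ (Lip0 z)) : G.Sd (G.Sd μ) = G.Sd μ := by
  apply ContinuousLinearMap.ext
  intro f
  simp only [Sd_apply]
  rw [G.S_idem]

lemma Sd_dirac_ball {u : M} {n₀ : ℕ} (hn₀ : dist u (G.x n₀) < G.r n₀) :
    G.Sd (dirac z u)
      = (G.bump n₀ u / G.r n₀) • dirac z (G.x n₀)
        - (G.bump n₀ u / G.r n₀) • dirac z (G.y n₀) := by
  apply ContinuousLinearMap.ext
  intro f
  simp only [Sd_apply, dirac_apply, ContinuousLinearMap.sub_apply,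
    ContinuousLinearMap.smul_apply, dirac_apply, smul_eq_mul]
  rw [G.S_apply, G.Tfun_eq_single (G.B f) hn₀, B_apply]
  ring

lemma Sd_dirac_zero {u : M} (h : ∀ n, G.r n ≤ dist u (G.x n)) :
    G.Sd (dirac z u) = 0 := by
  apply ContinuousLinearMap.ext
  intro f
  simp only [Sd_apply, dirac_apply, ContinuousLinearMap.zero_apply]
  rw [G.S_apply, G.Tfun_eq_zero (G.B f) h]

lemma Sd_dirac_mem (u : M) :
    G.Sd (dirac z u) ∈ Submodule.span ℝ (Set.range (dirac z)) := by
  by_cases h : ∃ n, dist u (G.x n) < G.r n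
  · obtain ⟨n₀, hn₀⟩ := h
    rw [G.Sd_dirac_ball hn₀]
    exact sub_mem
      (Submodule.smul_mem _ _ (Submodule.subset_span ⟨G.x n₀, rfl⟩))
      (Submodule.smul_mem _ _ (Submodule.subset_span ⟨G.y n₀, rfl⟩))
  · push_neg at h
    rw [G.Sd_dirac_zero h]
    exact Submodule.zero_mem _

lemma Sd_maps (μ : StrongDual ℝ (Lip0 z)) (hμ : μ ∈ FreeSpace z) :
    G.Sd μ ∈ FreeSpace z := by
  have hclosed : IsClosed ((FreeSpace z : Set (StrongDual ℝ (Lip0 z)))) :=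
    Submodule.isClosed_topologicalClosure _
  set C : Submodule ℝ (StrongDual ℝ (Lip0 z)) :=
    Submodule.comap (G.Sd.toLinearMap) (FreeSpace z) with hC
  have hsub : Submodule.span ℝ (Set.range (dirac z)) ≤ C := by
    rw [Submodule.span_le]
    rintro _ ⟨u, rfl⟩
    exact Submodule.le_topologicalClosure _ (G.Sd_dirac_mem u)
  have hccl : IsClosed ((C : Set (StrongDual ℝ (Lip0 z)))) := by
    have h : (C : Set (StrongDual ℝ (Lip0 z))) = ⇑G.Sd ⁻¹' (FreeSpace z : Set _) := rfl
    rw [h]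
    exact hclosed.preimage G.Sd.continuous
  have := Submodule.topologicalClosure_minimal _ hsub hccl
  exact this hμ

/-- The projection on the free space. -/
noncomputable def P : ↥(FreeSpace z) →L[ℝ] ↥(FreeSpace z) :=
  LinearMap.mkContinuous (E := ↥(FreeSpace z)) (F := ↥(FreeSpace z))
    { toFun := fun v => ⟨G.Sd v.1, G.Sd_maps v.1 v.2⟩
      map_add' := by intro v w; apply Subtype.ext; simp
      map_smul' := by intro c v; apply Subtype.ext; simp }
    ‖G.Sd‖
    (fun v => by
      show ‖G.Sd v.1‖ ≤ ‖G.Sd‖ * ‖v‖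
      exact G.Sd.le_opNorm v.1)

@[simp] lemma P_coe (v : ↥(FreeSpace z)) : (G.P v : StrongDual ℝ (Lip0 z)) = G.Sd v.1 :=
  rfl

lemma P_idem (v : ↥(FreeSpace z)) : G.P (G.P v) = G.P v := by
  apply Subtype.ext
  simp only [P_coe]
  exact G.Sd_idem v.1

end GoodSystem

end Projection
section Elleone

variable {M : Type*} [MetricSpace M] {z : M}

noncomputable instance FreeSpace.instCompleteSpace :
    CompleteSpace ↥(FreeSpace z) :=
  IsClosed.completeSpace_coe (hs := Submodule.isClosed_topologicalClosure _)

lemma Lip0.abs_sub_le (f : Lip0 z) (u v : M) : |f u - f v| ≤ ‖f‖ * dist u v := by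
  have h := Lip0.dist_le_lipConst f u v
  rw [Real.dist_eq] at h
  exact h

namespace GoodSystem

variable (G : GoodSystem z)

/-- distance between the pair points -/
noncomputable def d (n : ℕ) : ℝ := dist (G.x n) (G.y n)

lemma r_le_d (n : ℕ) : G.r n ≤ G.d n := by
  have := G.y_out n n
  rw [d, dist_comm]
  exact this

lemma d_pos (n : ℕ) : 0 < G.d n := lt_of_lt_of_le (G.r_pos n) (G.r_le_d n)

lemma d_le (n : ℕ) : G.d n ≤ 4 * G.r n := G.close n

/-- The normalized molecule `(δ_{xₙ} - δ_{yₙ}) / dₙ`. -/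
noncomputable def uD (n : ℕ) : StrongDual ℝ (Lip0 z) :=
  (G.d n)⁻¹ • (dirac z (G.x n) - dirac z (G.y n))

lemma uD_apply (n : ℕ) (f : Lip0 z) : G.uD n f = (f (G.x n) - f (G.y n)) / (G.d n) := by
  simp only [uD, ContinuousLinearMap.smul_apply, ContinuousLinearMap.sub_apply, dirac_apply,
    smul_eq_mul]
  ring

lemma norm_uD_le (n : ℕ) : ‖G.uD n‖ ≤ 1 := by
  refine ContinuousLinearMap.opNorm_le_bound _ zero_le_one ?_
  intro f
  rw [uD_apply, one_mul]
  have h := Lip0.abs_sub_le f (G.x n) (G.y n)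
  have hd := G.d_pos n
  rw [Real.norm_eq_abs, abs_div, abs_of_pos hd, div_le_iff₀ hd]
  calc |f (G.x n) - f (G.y n)| ≤ ‖f‖ * dist (G.x n) (G.y n) := h
    _ = ‖f‖ * G.d n := rfl

lemma uD_mem (n : ℕ) : G.uD n ∈ FreeSpace z :=
  Submodule.smul_mem _ _ (Submodule.sub_mem _
    (Submodule.le_topologicalClosure _ (Submodule.subset_span ⟨G.x n, rfl⟩))
    (Submodule.le_topologicalClosure _ (Submodule.subset_span ⟨G.y n, rfl⟩)))

/-- The molecule as an element of the free space. -/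
noncomputable def uF (n : ℕ) : ↥(FreeSpace z) := ⟨G.uD n, G.uD_mem n⟩

lemma norm_uF_le (n : ℕ) : ‖G.uF n‖ ≤ 1 := G.norm_uD_le n

lemma Sd_uD (n : ℕ) : G.Sd (G.uD n) = G.uD n := by
  apply ContinuousLinearMap.ext
  intro f
  rw [Sd_apply, uD_apply, uD_apply, G.S_x, G.S_y, sub_zero]

lemma P_uF (n : ℕ) : G.P (G.uF n) = G.uF n := Subtype.ext (G.Sd_uD n)

lemma summable_norm_l1 (a : lp (fun _ : ℕ => ℝ) 1) :
    Summable (fun n => ‖(a : ℕ → ℝ) n‖) := by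
  have h := (lp.memℓp a).summable (by norm_num : 0 < (1 : ℝ≥0∞).toReal)
  simpa using h

lemma norm_l1_eq (a : lp (fun _ : ℕ => ℝ) 1) : ‖a‖ = ∑' n, ‖(a : ℕ → ℝ) n‖ := by
  have h := lp.norm_eq_tsum_rpow (by norm_num : 0 < (1 : ℝ≥0∞).toReal) a
  simpa using h

lemma summable_smul_uF (a : lp (fun _ : ℕ => ℝ) 1) :
    Summable (fun n => (a : ℕ → ℝ) n • G.uF n) := by
  refine Summable.of_norm ?_
  refine Summable.of_nonneg_of_le (fun n => norm_nonneg _) (fun n => ?_)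
    (summable_norm_l1 a)
  rw [norm_smul ((a : ℕ → ℝ) n) (G.uF n)]
  have h1 := G.norm_uF_le n
  have h2 : (0:ℝ) ≤ ‖(a : ℕ → ℝ) n‖ := norm_nonneg _
  nlinarith

/-- The map `ℓ¹ → F(M)`, `a ↦ Σ aₙ uₙ`. -/
noncomputable def Phi : lp (fun _ : ℕ => ℝ) 1 →L[ℝ] ↥(FreeSpace z) :=
  LinearMap.mkContinuous (E := lp (fun _ : ℕ => ℝ) 1) (F := ↥(FreeSpace z))
    { toFun := fun a => ∑' n, (a : ℕ → ℝ) n • G.uF n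
      map_add' := by
        intro a b
        have ha := G.summable_smul_uF a
        have hb := G.summable_smul_uF b
        have hcoe : ∀ n, ((a + b : lp (fun _ : ℕ => ℝ) 1) : ℕ → ℝ) n
            = (a : ℕ → ℝ) n + (b : ℕ → ℝ) n := fun n => by rw [lp.coeFn_add]; rfl
        have : (fun n => ((a + b : lp (fun _ : ℕ => ℝ) 1) : ℕ → ℝ) n • G.uF n)
            = fun n => (a : ℕ → ℝ) n • G.uF n + (b : ℕ → ℝ) n • G.uF n := by
          ext n; rw [hcoe n, add_smul]
        show (∑' n, ((a + b : lp (fun _ : ℕ => ℝ) 1) : ℕ → ℝ) n • G.uF n)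
            = (∑' n, (a : ℕ → ℝ) n • G.uF n) + ∑' n, (b : ℕ → ℝ) n • G.uF n
        rw [this]
        exact Summable.tsum_add ha hb
      map_smul' := by
        intro c a
        simp only [RingHom.id_apply]
        have ha := G.summable_smul_uF a
        have hcoe : ∀ n, ((c • a : lp (fun _ : ℕ => ℝ) 1) : ℕ → ℝ) n
            = c * (a : ℕ → ℝ) n := fun n => by rw [lp.coeFn_smul]; rfl
        have : (fun n => ((c • a : lp (fun _ : ℕ => ℝ) 1) : ℕ → ℝ) n • G.uF n)
            = fun n => c • ((a : ℕ → ℝ) n • G.uF n) := by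
          ext n; rw [hcoe n, mul_smul]
        show (∑' n, ((c • a : lp (fun _ : ℕ => ℝ) 1) : ℕ → ℝ) n • G.uF n)
            = c • ∑' n, (a : ℕ → ℝ) n • G.uF n
        rw [this]
        exact Summable.tsum_const_smul c ha }
    1
    (fun a => by
      have hs : Summable (fun n => ‖(a : ℕ → ℝ) n • G.uF n‖) := by
        refine Summable.of_nonneg_of_le (fun n => norm_nonneg _) (fun n => ?_)
          (summable_norm_l1 a)
        rw [norm_smul ((a : ℕ → ℝ) n) (G.uF n)]
        have h1 := G.norm_uF_le n
        have h2 : (0:ℝ) ≤ ‖(a : ℕ → ℝ) n‖ := norm_nonneg _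
        nlinarith
      calc ‖∑' n, (a : ℕ → ℝ) n • G.uF n‖ ≤ ∑' n, ‖(a : ℕ → ℝ) n • G.uF n‖ :=
            norm_tsum_le_tsum_norm hs
        _ ≤ ∑' n, ‖(a : ℕ → ℝ) n‖ := by
            refine Summable.tsum_le_tsum (fun n => ?_) hs (summable_norm_l1 a)
            rw [norm_smul ((a : ℕ → ℝ) n) (G.uF n)]
            have h1 := G.norm_uF_le n
            have h2 : (0:ℝ) ≤ ‖(a : ℕ → ℝ) n‖ := norm_nonneg _
            nlinarith
        _ = ‖a‖ := (norm_l1_eq a).symm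
        _ = 1 * ‖a‖ := (one_mul _).symm)

lemma Phi_apply (a : lp (fun _ : ℕ => ℝ) 1) :
    G.Phi a = ∑' n, (a : ℕ → ℝ) n • G.uF n := rfl

lemma P_Phi (a : lp (fun _ : ℕ => ℝ) 1) : G.P (G.Phi a) = G.Phi a := by
  rw [Phi_apply, ContinuousLinearMap.map_tsum G.P (G.summable_smul_uF a)]
  have : (fun n => G.P ((a : ℕ → ℝ) n • G.uF n)) = fun n => (a : ℕ → ℝ) n • G.uF n := by
    ext n
    rw [map_smul, G.P_uF]
  rw [this]

end GoodSystem

end Elleone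
section Pairing

variable {M : Type*} [MetricSpace M] {z : M}

/-- Evaluation at a fixed function, as a functional on the free space. -/
noncomputable def evalF (g : Lip0 z) : ↥(FreeSpace z) →L[ℝ] ℝ :=
  LinearMap.mkContinuous (E := ↥(FreeSpace z)) (F := ℝ)
    { toFun := fun v => (v : StrongDual ℝ (Lip0 z)) g
      map_add' := by intro v w; simp
      map_smul' := by intro c v; simp }
    ‖g‖
    (fun v => by
      have h := ((v : StrongDual ℝ (Lip0 z))).le_opNorm g
      rw [Real.norm_eq_abs]
      calc |(v : StrongDual ℝ (Lip0 z)) g|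
          ≤ ‖(v : StrongDual ℝ (Lip0 z))‖ * ‖g‖ := h
        _ = ‖g‖ * ‖v‖ := by rw [Submodule.coe_norm, mul_comm])

@[simp] lemma evalF_apply (g : Lip0 z) (v : ↥(FreeSpace z)) :
    evalF g v = (v : StrongDual ℝ (Lip0 z)) g := rfl

namespace GoodSystem

variable (G : GoodSystem z)

/-- sign of the coordinates of `a` (with junk value `0`). -/
noncomputable def sgn (a : lp (fun _ : ℕ => ℝ) 1) (n : ℕ) : ℝ :=
  |(a : ℕ → ℝ) n| / (a : ℕ → ℝ) n

lemma sgn_mul (a : lp (fun _ : ℕ => ℝ) 1) (n : ℕ) :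
    sgn a n * (a : ℕ → ℝ) n = |(a : ℕ → ℝ) n| := by
  by_cases h : (a : ℕ → ℝ) n = 0
  · simp [sgn, h]
  · rw [sgn, div_mul_cancel₀ _ h]

lemma abs_sgn_le (a : lp (fun _ : ℕ => ℝ) 1) (n : ℕ) : |sgn a n| ≤ 1 := by
  by_cases h : (a : ℕ → ℝ) n = 0
  · simp [sgn, h]
  · rw [sgn, abs_div, abs_abs, div_self (abs_ne_zero.2 h)]

/-- The dual sign sequence in `ℓ∞`. -/
noncomputable def alphaOf (a : lp (fun _ : ℕ => ℝ) 1) : lp (fun _ : ℕ => ℝ) ∞ :=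
  ⟨fun n => sgn a n * (G.d n / G.r n), by
    refine memℓp_infty ⟨4, ?_⟩
    rintro w ⟨n, rfl⟩
    have h1 := abs_sgn_le a n
    have h2 : |G.d n / G.r n| ≤ 4 := by
      rw [abs_div, abs_of_pos (G.d_pos n), abs_of_pos (G.r_pos n), div_le_iff₀ (G.r_pos n)]
      exact G.d_le n
    have h3 : (0:ℝ) ≤ |G.d n / G.r n| := abs_nonneg _
    calc ‖sgn a n * (G.d n / G.r n)‖ = |sgn a n| * |G.d n / G.r n| := by
          rw [Real.norm_eq_abs, abs_mul]
      _ ≤ 1 * 4 := by nlinarith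
      _ = 4 := one_mul 4⟩

lemma norm_alphaOf_le (a : lp (fun _ : ℕ => ℝ) 1) : ‖G.alphaOf a‖ ≤ 4 := by
  rw [lp.norm_eq_ciSup]
  refine ciSup_le (fun n => ?_)
  show ‖sgn a n * (G.d n / G.r n)‖ ≤ 4
  have h1 := abs_sgn_le a n
  have h2 : |G.d n / G.r n| ≤ 4 := by
    rw [abs_div, abs_of_pos (G.d_pos n), abs_of_pos (G.r_pos n), div_le_iff₀ (G.r_pos n)]
    exact G.d_le n
  have h3 : (0:ℝ) ≤ |G.d n / G.r n| := abs_nonneg _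
  calc ‖sgn a n * (G.d n / G.r n)‖ = |sgn a n| * |G.d n / G.r n| := by
        rw [Real.norm_eq_abs, abs_mul]
    _ ≤ 1 * 4 := by nlinarith
    _ = 4 := one_mul 4

lemma uD_TL_alphaOf (a : lp (fun _ : ℕ => ℝ) 1) (n : ℕ) :
    G.uD n (G.TL (G.alphaOf a)) = sgn a n := by
  rw [uD_apply]
  have hx : (G.TL (G.alphaOf a) : Lip0 z) (G.x n) = (G.alphaOf a : ℕ → ℝ) n * G.r n := by
    show G.Tfun (G.alphaOf a) (G.x n) = _
    exact G.Tfun_x _ n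
  have hy : (G.TL (G.alphaOf a) : Lip0 z) (G.y n) = 0 := by
    show G.Tfun (G.alphaOf a) (G.y n) = _
    exact G.Tfun_y _ n
  rw [hx, hy, sub_zero]
  show sgn a n * (G.d n / G.r n) * G.r n / G.d n = sgn a n
  have hr := ne_of_gt (G.r_pos n)
  have hd := ne_of_gt (G.d_pos n)
  field_simp

lemma norm_le_norm_Phi (a : lp (fun _ : ℕ => ℝ) 1) : ‖a‖ ≤ 8 * ‖G.Phi a‖ := by
  set g : Lip0 z := G.TL (G.alphaOf a) with hgdef
  have hg : ‖g‖ ≤ 8 := by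
    have h1 : ‖g‖ ≤ 2 * ‖G.alphaOf a‖ := G.norm_Tlip_le (G.alphaOf a)
    have h2 := G.norm_alphaOf_le a
    linarith
  have heval : evalF g (G.Phi a) = ‖a‖ := by
    rw [Phi_apply, ContinuousLinearMap.map_tsum (evalF g) (G.summable_smul_uF a)]
    have hterm : ∀ n, evalF g ((a : ℕ → ℝ) n • G.uF n) = ‖(a : ℕ → ℝ) n‖ := by
      intro n
      rw [map_smul, evalF_apply]
      have : ((G.uF n : ↥(FreeSpace z)) : StrongDual ℝ (Lip0 z)) = G.uD n := rfl
      rw [smul_eq_mul, this, G.uD_TL_alphaOf a n, Real.norm_eq_abs, mul_comm]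
      exact sgn_mul a n
    calc (∑' n, evalF g ((a : ℕ → ℝ) n • G.uF n)) = ∑' n, ‖(a : ℕ → ℝ) n‖ := by
          exact tsum_congr hterm
      _ = ‖a‖ := (norm_l1_eq a).symm
  have hb : |evalF g (G.Phi a)| ≤ ‖G.Phi a‖ * 8 := by
    have h1 : |((G.Phi a : ↥(FreeSpace z)) : StrongDual ℝ (Lip0 z)) g|
        ≤ ‖((G.Phi a : ↥(FreeSpace z)) : StrongDual ℝ (Lip0 z))‖ * ‖g‖ :=
      ((G.Phi a : ↥(FreeSpace z)) : StrongDual ℝ (Lip0 z)).le_opNorm g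
    rw [evalF_apply]
    calc |((G.Phi a : ↥(FreeSpace z)) : StrongDual ℝ (Lip0 z)) g|
        ≤ ‖((G.Phi a : ↥(FreeSpace z)) : StrongDual ℝ (Lip0 z))‖ * ‖g‖ := h1
      _ ≤ ‖G.Phi a‖ * 8 := by
          rw [← Submodule.coe_norm]
          have := norm_nonneg (G.Phi a)
          nlinarith
  rw [heval] at hb
  calc ‖a‖ ≤ |‖a‖| := le_abs_self _
    _ ≤ ‖G.Phi a‖ * 8 := hb
    _ = 8 * ‖G.Phi a‖ := mul_comm _ _

end GoodSystem

end Pairing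
section Part2sec

variable {M : Type*} [MetricSpace M] {z : M}

namespace GoodSystem

variable (G : GoodSystem z)

lemma Phi_antilip : AntilipschitzWith 8 ⇑G.Phi := by
  refine G.Phi.antilipschitz_of_bound (K := 8) (fun a => ?_)
  have := G.norm_le_norm_Phi a
  have h8 : ((8 : ℝ≥0) : ℝ) = 8 := by norm_num
  rw [h8]
  exact this

lemma Phi_single (n : ℕ) (t : ℝ) : G.Phi (lp.single 1 n t) = t • G.uF n := by
  classical
  rw [Phi_apply]
  have h : ∀ b, b ≠ n → ((lp.single 1 n t : lp (fun _ : ℕ => ℝ) 1) : ℕ → ℝ) b • G.uF b = 0 := by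
    intro b hb
    have : ((lp.single 1 n t : lp (fun _ : ℕ => ℝ) 1) : ℕ → ℝ) b = 0 := by
      rw [lp.single_apply]
      simp [hb]
    rw [this, zero_smul]
  rw [tsum_eq_single n h]
  have : ((lp.single 1 n t : lp (fun _ : ℕ => ℝ) 1) : ℕ → ℝ) n = t := by
    rw [lp.single_apply]
    simp
  rw [this]

lemma exists_Phi_eq (v : ↥(FreeSpace z)) : ∃ a, G.Phi a = G.P v := by
  classical
  set Rmod : Submodule ℝ (StrongDual ℝ (Lip0 z)) :=
    Submodule.map (FreeSpace z).subtype
      (LinearMap.range (G.Phi : lp (fun _ : ℕ => ℝ) 1 →ₗ[ℝ] ↥(FreeSpace z))) with hR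
  have hRset : (Rmod : Set (StrongDual ℝ (Lip0 z)))
      = Subtype.val '' (Set.range ⇑G.Phi) := by
    ext w
    simp only [hR, SetLike.mem_coe, Submodule.mem_map, LinearMap.mem_range, Set.mem_image,
      Set.mem_range]
    constructor
    · rintro ⟨y, ⟨a, rfl⟩, hy⟩
      exact ⟨G.Phi a, ⟨a, rfl⟩, hy⟩
    · rintro ⟨y, ⟨a, rfl⟩, hy⟩
      exact ⟨G.Phi a, ⟨a, rfl⟩, hy⟩
  have hclosedR : IsClosed (Rmod : Set (StrongDual ℝ (Lip0 z))) := by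
    rw [hRset]
    have h1 : IsClosed (Set.range ⇑G.Phi) :=
      G.Phi_antilip.isClosed_range G.Phi.uniformContinuous
    have h2 : Topology.IsClosedEmbedding
        (Subtype.val : ↥(FreeSpace z) → StrongDual ℝ (Lip0 z)) := by
      apply Topology.IsClosedEmbedding.subtypeVal
      exact Submodule.isClosed_topologicalClosure _
    exact h2.isClosedMap _ h1
  have hdirac : ∀ u : M, G.Sd (dirac z u) ∈ Rmod := by
    intro u
    by_cases h : ∃ n, dist u (G.x n) < G.r n
    · obtain ⟨n₀, hn₀⟩ := h
      set t : ℝ := G.bump n₀ u / G.r n₀ * G.d n₀ with ht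
      refine Submodule.mem_map.2 ⟨G.Phi (lp.single 1 n₀ t), LinearMap.mem_range.2 ⟨_, rfl⟩, ?_⟩
      show ((G.Phi (lp.single 1 n₀ t) : ↥(FreeSpace z)) : StrongDual ℝ (Lip0 z))
          = G.Sd (dirac z u)
      rw [G.Phi_single]
      have hval : ((t • G.uF n₀ : ↥(FreeSpace z)) : StrongDual ℝ (Lip0 z))
          = t • G.uD n₀ := rfl
      rw [hval, G.Sd_dirac_ball hn₀]
      rw [uD, smul_smul]
      refine Eq.trans ?_ (smul_sub _ _ _)
      congr 1
      have hd := ne_of_gt (G.d_pos n₀)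
      rw [ht, mul_assoc, mul_inv_cancel₀ hd, mul_one]
    · push_neg at h
      rw [G.Sd_dirac_zero h]
      exact Submodule.zero_mem _
  have hspan : ∀ μ ∈ Submodule.span ℝ (Set.range (dirac z)), G.Sd μ ∈ Rmod := by
    intro μ hμ
    have hle : Submodule.span ℝ (Set.range (dirac z)) ≤ Rmod.comap G.Sd.toLinearMap := by
      rw [Submodule.span_le]
      rintro _ ⟨u, rfl⟩
      exact hdirac u
    exact hle hμ
  have hμv : (v : StrongDual ℝ (Lip0 z))
      ∈ closure ((Submodule.span ℝ (Set.range (dirac z)) : Submodule ℝ _) : Set _) := by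
    have h2 : (v : StrongDual ℝ (Lip0 z))
        ∈ (Submodule.span ℝ (Set.range (dirac z))).topologicalClosure := v.2
    rw [← Submodule.topologicalClosure_coe]
    exact h2
  have himg : G.Sd (v : StrongDual ℝ (Lip0 z))
      ∈ closure (⇑G.Sd '' ((Submodule.span ℝ (Set.range (dirac z)) : Submodule ℝ _) : Set _)) :=
    image_closure_subset_closure_image G.Sd.continuous ⟨(v : _), hμv, rfl⟩
  have hmem : G.Sd (v : StrongDual ℝ (Lip0 z)) ∈ (Rmod : Set _) := by
    have hsub2 : ⇑G.Sd '' ((Submodule.span ℝ (Set.range (dirac z)) : Submodule ℝ _) : Set _)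
        ⊆ (Rmod : Set _) := by
      rintro _ ⟨μ, hμ, rfl⟩
      exact hspan μ hμ
    have := closure_mono hsub2 himg
    rwa [hclosedR.closure_eq] at this
  obtain ⟨w, hwr, hw⟩ := Submodule.mem_map.1 hmem
  obtain ⟨a, rfl⟩ := LinearMap.mem_range.1 hwr
  refine ⟨a, Subtype.ext ?_⟩
  show ((G.Phi a : ↥(FreeSpace z)) : StrongDual ℝ (Lip0 z)) = _
  rw [show ((G.P v : ↥(FreeSpace z)) : StrongDual ℝ (Lip0 z)) = G.Sd v.1 from rfl]
  exact hw

include G in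
lemma part2 : ∃ (Y : Submodule ℝ ↥(FreeSpace z)) (P : ↥(FreeSpace z) →L[ℝ] ↥(FreeSpace z)),
    (∀ v, P v ∈ Y) ∧ (∀ v ∈ Y, P v = v) ∧
    Nonempty (↥Y ≃L[ℝ] lp (fun _ : ℕ => ℝ) 1) := by
  classical
  refine ⟨LinearMap.range (G.P : ↥(FreeSpace z) →ₗ[ℝ] ↥(FreeSpace z)), G.P, ?_, ?_, ?_⟩
  · intro v
    exact LinearMap.mem_range.2 ⟨v, rfl⟩
  · rintro v hv
    obtain ⟨w, rfl⟩ := LinearMap.mem_range.1 hv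
    exact G.P_idem w
  · set Y := LinearMap.range (G.P : ↥(FreeSpace z) →ₗ[ℝ] ↥(FreeSpace z)) with hY
    have hmem : ∀ a, G.Phi a ∈ Y := fun a => LinearMap.mem_range.2 ⟨G.Phi a, G.P_Phi a⟩
    set Φr : lp (fun _ : ℕ => ℝ) 1 →ₗ[ℝ] ↥Y :=
      LinearMap.codRestrict Y (G.Phi : lp (fun _ : ℕ => ℝ) 1 →ₗ[ℝ] ↥(FreeSpace z)) hmem
      with hPhir
    have hΦr_val : ∀ a, ((Φr a : ↥Y) : ↥(FreeSpace z)) = G.Phi a := fun a => rfl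
    have hinj : Function.Injective ⇑Φr := by
      intro a b hab
      have h1 : G.Phi a = G.Phi b := by
        rw [← hΦr_val a, ← hΦr_val b, hab]
      have h2 : ‖a - b‖ ≤ 8 * ‖G.Phi (a - b)‖ := G.norm_le_norm_Phi _
      rw [map_sub, h1, sub_self, norm_zero, mul_zero] at h2
      have h3 := norm_nonneg (a - b)
      have h4 : ‖a - b‖ = 0 := le_antisymm h2 h3
      exact sub_eq_zero.1 (norm_eq_zero.1 h4)
    have hsurj : Function.Surjective ⇑Φr := by
      rintro ⟨v, hv⟩
      obtain ⟨w, rfl⟩ := LinearMap.mem_range.1 hv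
      obtain ⟨a, ha⟩ := G.exists_Phi_eq w
      refine ⟨a, Subtype.ext ?_⟩
      rw [hΦr_val a]
      exact ha
    set e : lp (fun _ : ℕ => ℝ) 1 ≃ₗ[ℝ] ↥Y := LinearEquiv.ofBijective Φr ⟨hinj, hsurj⟩ with he
    have hcont : Continuous ⇑e := by
      show Continuous ⇑Φr
      exact Continuous.subtype_mk G.Phi.continuous _
    have hcont2 : Continuous ⇑e.symm := by
      have := AddMonoidHomClass.continuous_of_bound e.symm.toLinearMap 8
        (fun yv => ?_)
      · exact this
      · have h1 : G.Phi (e.symm yv) = ((yv : ↥Y) : ↥(FreeSpace z)) := by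
          have h2 := e.apply_symm_apply yv
          have h3 := congrArg (fun (w : ↥Y) => ((w : ↥Y) : ↥(FreeSpace z))) h2
          calc G.Phi (e.symm yv) = ((Φr (e.symm yv) : ↥Y) : ↥(FreeSpace z)) :=
                (hΦr_val _).symm
            _ = ((yv : ↥Y) : ↥(FreeSpace z)) := h3
        have h2 := G.norm_le_norm_Phi (e.symm yv)
        rw [h1] at h2
        have h4 : ‖((yv : ↥Y) : ↥(FreeSpace z))‖ = ‖yv‖ := (Submodule.coe_norm yv).symm
        rw [h4] at h2
        exact h2
    exact ⟨(({ e with continuous_toFun := hcont, continuous_invFun := hcont2 } :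
      lp (fun _ : ℕ => ℝ) 1 ≃L[ℝ] ↥Y)).symm⟩

end GoodSystem

end Part2sec
section Existence

variable {M : Type*} [MetricSpace M]

/-- Case A: `p` is an accumulation point. -/
lemma goodSystem_of_accum (z p : M) (hp : ∀ ε > 0, ∃ q, q ≠ p ∧ dist q p < ε) :
    Nonempty (GoodSystem z) := by
  classical
  set δ : ℝ := if z = p then 1 else dist z p / 2 with hδdef
  have hδ : 0 < δ := by
    rw [hδdef]
    split_ifs with h
    · norm_num
    · have := dist_pos.2 h
      linarith
  have key : ∀ s : {q : M // q ≠ p}, ∃ q : M, q ≠ p ∧ dist q p < dist s.1 p / 5 := by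
    intro s
    have h5 : 0 < dist s.1 p / 5 := by
      have := dist_pos.2 s.2
      linarith
    exact hp _ h5
  set step : {q : M // q ≠ p} → {q : M // q ≠ p} :=
    fun s => ⟨(key s).choose, (key s).choose_spec.1⟩ with hstepdef
  have hstep : ∀ s, dist (step s).1 p < dist s.1 p / 5 := fun s => (key s).choose_spec.2
  obtain ⟨q0, hq0, hq0δ⟩ := hp δ hδ
  set X0 : {q : M // q ≠ p} := ⟨q0, hq0⟩ with hX0
  set Xs : ℕ → {q : M // q ≠ p} := fun n => step^[n] X0 with hXs
  have hXsucc : ∀ n, Xs (n + 1) = step (Xs n) := fun n =>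
    Function.iterate_succ_apply' step n X0
  have hpos : ∀ n, 0 < dist (Xs n).1 p := fun n => dist_pos.2 (Xs n).2
  have hdec : ∀ n, dist (Xs (n + 1)).1 p < dist (Xs n).1 p / 5 := by
    intro n
    rw [hXsucc n]
    exact hstep _
  have hmono : ∀ n m, n < m → dist (Xs m).1 p ≤ dist (Xs n).1 p / 5 := by
    intro n m hnm
    induction m with
    | zero => omega
    | succ k ih =>
      rcases Nat.lt_succ_iff_lt_or_eq.1 hnm with h | h
      · have h1 := ih h
        have h2 := hdec k
        have h3 := hpos k
        linarith
      · subst h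
        exact le_of_lt (hdec n)
  have hle0 : ∀ n, dist (Xs n).1 p ≤ dist (Xs 0).1 p := by
    intro n
    cases n with
    | zero => exact le_rfl
    | succ k =>
      have h1 := hmono 0 (k + 1) (Nat.succ_pos k)
      have h2 := hpos 0
      linarith
  have hX0δ : dist (Xs 0).1 p < δ := by
    rw [hXs]
    simpa using hq0δ
  refine ⟨⟨fun n => (Xs n).1, fun n => dist (Xs n).1 p / 4, fun _ => p,
    ?_, ?_, ?_, ?_, ?_⟩⟩
  · intro n
    have := hpos n
    linarith
  · -- disjointness
    intro u m n hmn h1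
    intro h2
    have key2 : ∀ a b : ℕ, a < b → dist u (Xs a).1 < dist (Xs a).1 p / 4 →
        dist u (Xs b).1 < dist (Xs b).1 p / 4 → False := by
      intro a b hab ha hb
      have hD := hpos a
      have hmab := hmono a b hab
      have ht1 : dist (Xs a).1 (Xs b).1 ≤ dist u (Xs a).1 + dist u (Xs b).1 :=
        dist_triangle_left _ _ _
      have ht2 : dist (Xs a).1 p ≤ dist (Xs a).1 (Xs b).1 + dist (Xs b).1 p :=
        dist_triangle _ _ _
      linarith
    rcases lt_or_gt_of_ne hmn with h | h
    · exact key2 m n h h1 h2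
    · exact key2 n m h h2 h1
  · -- z_out
    intro n
    by_cases hzp : z = p
    · subst hzp
      rw [dist_comm]
      have := hpos n
      linarith [dist_comm ((Xs n).1) z]
    · have hδeq : δ = dist z p / 2 := by rw [hδdef, if_neg hzp]
      have h1 : dist (Xs n).1 p < δ := lt_of_le_of_lt (hle0 n) hX0δ
      have h2 : dist z p ≤ dist z (Xs n).1 + dist (Xs n).1 p := dist_triangle _ _ _
      rw [hδeq] at h1
      linarith
  · -- y_out
    intro n m
    rw [dist_comm]
    have := hpos m
    linarith [dist_comm ((Xs m).1) p]
  · -- close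
    intro n
    have : dist (Xs n).1 p = 4 * (dist (Xs n).1 p / 4) := by ring
    exact le_of_eq this

/-- Case B: every point is isolated. -/
lemma goodSystem_of_isolated [Infinite M] (z : M)
    (hp : ∀ p : M, ∃ ε > 0, ∀ q, q ≠ p → ε ≤ dist q p) :
    Nonempty (GoodSystem z) := by
  classical
  set ρ : M → ℝ := fun p => Metric.infDist p ({p}ᶜ : Set M) with hρdef
  have hcne : ∀ p : M, ({p}ᶜ : Set M).Nonempty := by
    intro p
    obtain ⟨q, hq⟩ := exists_ne p
    exact ⟨q, hq⟩
  have hρ_pos : ∀ p, 0 < ρ p := by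
    intro p
    obtain ⟨ε, hε, hεle⟩ := hp p
    have hle : ε ≤ ρ p := by
      by_contra hlt
      push_neg at hlt
      obtain ⟨q, hq, hqd⟩ := (Metric.infDist_lt_iff (hcne p)).1 hlt
      have h2 := hεle q hq
      rw [dist_comm] at h2
      linarith
    linarith
  have hρ_le : ∀ p q : M, q ≠ p → ρ p ≤ dist p q := by
    intro p q hq
    exact Metric.infDist_le_dist_of_mem hq
  have hρ_near : ∀ p : M, ∃ q, q ≠ p ∧ dist p q < 3 / 2 * ρ p := by
    intro p
    have h1 : ρ p < 3 / 2 * ρ p := by have := hρ_pos p; linarith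
    obtain ⟨q, hq, hqd⟩ := (Metric.infDist_lt_iff (hcne p)).1 h1
    exact ⟨q, hq, hqd⟩
  have key : ∀ F : Finset M, ∃ ab : M × M,
      ab.1 ∉ F ∧ ab.2 ≠ ab.1 ∧ ab.2 ∉ F ∧ dist ab.1 ab.2 ≤ 3 * ρ ab.1 := by
    intro F
    by_contra hcon
    push_neg at hcon
    have hcon' : ∀ a b : M, a ∉ F → b ≠ a → dist a b ≤ 3 * ρ a → b ∈ F := by
      intro a b ha hb hd
      by_contra hbF
      have := hcon (a, b) ha hb hbF
      simp only at this
      linarith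
    set gg : M → M := fun a => if h : a ∈ F then a else (hρ_near a).choose with hgg
    have hggF : ∀ a, a ∉ F → gg a ∈ F ∧ gg a ≠ a ∧ dist a (gg a) < 3 / 2 * ρ a := by
      intro a ha
      have hspec := (hρ_near a).choose_spec
      have hgga : gg a = (hρ_near a).choose := by rw [hgg]; exact dif_neg ha
      refine ⟨?_, by rw [hgga]; exact hspec.1, by rw [hgga]; exact hspec.2⟩
      refine hcon' a _ ha (by rw [hgga]; exact hspec.1) ?_
      rw [hgga]
      have h1 := hρ_pos a
      have h2 := hspec.2
      linarith
    have hinj : Set.InjOn gg ((↑F : Set M)ᶜ) := by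
      intro a ha a' ha' heq
      have haF : a ∉ F := fun h => ha (Finset.mem_coe.2 h)
      have haF' : a' ∉ F := fun h => ha' (Finset.mem_coe.2 h)
      by_contra hne
      have h1 := hggF a haF
      have h2 := hggF a' haF'
      have ht : dist a a' ≤ dist a (gg a) + dist a' (gg a') := by
        rw [heq]
        exact dist_triangle_right a a' (gg a')
      rcases le_total (ρ a) (ρ a') with hle | hle
      · have hda : dist a' a ≤ 3 * ρ a' := by
          rw [dist_comm]
          have h3 := h1.2.2
          have h4 := h2.2.2
          linarith
        exact haF (hcon' a' a haF' (fun h => hne h) hda)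
      · have hda : dist a a' ≤ 3 * ρ a := by
          have h3 := h1.2.2
          have h4 := h2.2.2
          linarith
        exact haF' (hcon' a a' haF (fun h => hne h.symm) hda)
    have hfin : ((↑F : Set M)ᶜ).Finite := by
      refine Set.Finite.of_finite_image ?_ hinj
      refine Set.Finite.subset F.finite_toSet ?_
      rintro _ ⟨a, ha, rfl⟩
      exact (hggF a (fun h => ha (Finset.mem_coe.2 h))).1
    exact (Set.Finite.infinite_compl F.finite_toSet) hfin
  set nxt : Finset M → Finset M :=
    fun F => insert (key F).choose.1 (insert (key F).choose.2 F) with hnxt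
  set SF : ℕ → Finset M := fun n => nxt^[n] {z} with hSF
  set xx : ℕ → M := fun n => (key (SF n)).choose.1 with hxx
  set yy : ℕ → M := fun n => (key (SF n)).choose.2 with hyy
  have hSFsucc : ∀ n, SF (n + 1) = insert (xx n) (insert (yy n) (SF n)) := by
    intro n
    show nxt^[n + 1] {z} = _
    rw [Function.iterate_succ_apply' nxt n {z}]
  have hxF : ∀ n, xx n ∉ SF n := fun n => (key (SF n)).choose_spec.1
  have hyne : ∀ n, yy n ≠ xx n := fun n => (key (SF n)).choose_spec.2.1
  have hyF : ∀ n, yy n ∉ SF n := fun n => (key (SF n)).choose_spec.2.2.1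
  have hclose : ∀ n, dist (xx n) (yy n) ≤ 3 * ρ (xx n) :=
    fun n => (key (SF n)).choose_spec.2.2.2
  have hmono : ∀ n m, n ≤ m → SF n ⊆ SF m := by
    intro n m hnm
    induction m with
    | zero =>
      have h0 : n = 0 := Nat.le_zero.1 hnm
      rw [h0]
    | succ k ih =>
      rcases eq_or_lt_of_le hnm with h | h
      · rw [h]
      · have h1 := ih (Nat.lt_succ_iff.1 h)
        refine subset_trans h1 ?_
        rw [hSFsucc k]
        exact subset_trans (Finset.subset_insert _ _) (Finset.subset_insert _ _)
  have hz : ∀ n, z ∈ SF n := by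
    intro n
    have h0 : z ∈ SF 0 := by
      show z ∈ nxt^[0] {z}
      simp
    exact hmono 0 n (Nat.zero_le n) h0
  have hxmem : ∀ n, xx n ∈ SF (n + 1) := by
    intro n
    rw [hSFsucc n]
    exact Finset.mem_insert_self _ _
  have hymem : ∀ n, yy n ∈ SF (n + 1) := by
    intro n
    rw [hSFsucc n]
    exact Finset.mem_insert_of_mem (Finset.mem_insert_self _ _)
  have hxne : ∀ m n, m ≠ n → xx m ≠ xx n := by
    intro m n hmn
    rcases lt_or_gt_of_ne hmn with h | h
    · intro he
      apply hxF n
      rw [← he]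
      exact hmono (m + 1) n h (hxmem m)
    · intro he
      apply hxF m
      rw [he]
      exact hmono (n + 1) m h (hxmem n)
  have hyx : ∀ n m, yy n ≠ xx m := by
    intro n m
    rcases lt_trichotomy m n with h | h | h
    · intro he
      apply hyF n
      rw [he]
      exact hmono (m + 1) n h (hxmem m)
    · rw [h]
      exact hyne n
    · intro he
      apply hxF m
      rw [← he]
      exact hmono (n + 1) m h (hymem n)
  have hzx : ∀ n, z ≠ xx n := by
    intro n he
    apply hxF n
    rw [← he]
    exact hz n
  refine ⟨⟨xx, fun n => ρ (xx n), yy, ?_, ?_, ?_, ?_, ?_⟩⟩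
  · intro n
    exact hρ_pos (xx n)
  · intro u m n hmn h1 h2
    have hu1 : u = xx m := by
      by_contra hne
      have h3 := hρ_le (xx m) u hne
      rw [dist_comm] at h3
      linarith
    have hu2 : u = xx n := by
      by_contra hne
      have h3 := hρ_le (xx n) u hne
      rw [dist_comm] at h3
      linarith
    exact hxne m n hmn (by rw [← hu1, ← hu2])
  · intro n
    have h3 := hρ_le (xx n) z (hzx n)
    rw [dist_comm] at h3
    exact h3
  · intro n m
    have h3 := hρ_le (xx m) (yy n) (hyx n m)
    rw [dist_comm] at h3
    exact h3
  · intro n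
    have h1 := hclose n
    have h2 := hρ_pos (xx n)
    linarith

/-- Every infinite metric space admits a good system. -/
lemma exists_goodSystem [Infinite M] (z : M) : Nonempty (GoodSystem z) := by
  by_cases h : ∃ p : M, ∀ ε > 0, ∃ q, q ≠ p ∧ dist q p < ε
  · obtain ⟨p, hp⟩ := h
    exact goodSystem_of_accum z p hp
  · push_neg at h
    refine goodSystem_of_isolated z ?_
    intro p
    obtain ⟨ε, hε, hq⟩ := h p
    exact ⟨ε, hε, fun q hqp => hq q hqp⟩

end Existence
/-- for every infinite metric space `M`, `ℓ_∞` embeds isomorphically into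
`Lip_0(M)` and `ℓ_1` is isomorphic to a complemented subspace of `F(M)`. -/
theorem ell_infty_in_lip0_and_ell1_complemented_in_free {M : Type*} [MetricSpace M]
    [Infinite M] (z : M) :
    (∃ T : lp (fun _ : ℕ => ℝ) ∞ →L[ℝ] Lip0 z, ∃ c : ℝ, 0 < c ∧ ∀ α, c * ‖α‖ ≤ ‖T α‖) ∧
    (∃ (Y : Submodule ℝ ↥(FreeSpace z)) (P : ↥(FreeSpace z) →L[ℝ] ↥(FreeSpace z)),
      (∀ v, P v ∈ Y) ∧ (∀ v ∈ Y, P v = v) ∧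
      Nonempty (↥Y ≃L[ℝ] lp (fun _ : ℕ => ℝ) 1)) := by
  obtain ⟨G⟩ := exists_goodSystem z
  exact ⟨G.part1, G.part2⟩
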